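/- arXiv:2510.00159 — 3 statements merged into one kernel-verified Lean document; each statement's English description precedes it below -/
import Mathlib

section
/- Let c, N, k be integers with c ≥ 1, N ≥ 3 and k ≥ 2, and let n_1, …, n_k be integers satisfying 1 ≤ n_j ≤ N − 1 for every j and n_1 + ⋯ + n_k = N + 1. For each j set w_j := c if n_j = 1, and w_j := n_j(4c − 1) − 5c + 2 if n_j ≥ 2. Then Σ_{j=1}^k w_j ≤ N(4c − 1) − 3(2c − 1). -/
/-!
Write `r` for the number of factors of degree `1`, `m` for the number of the others and `s` for
the sum of the degrees of the others, so that `r + s = N + 1` and `2 m ≤ s ≤ m (N - 1)`.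
The weights sum to `r c + s (4c - 1) - m (5c - 2)`, which falls short of the bound by
`r (3c - 1) + (m - 2)(5c - 2)`. This is nonnegative when `m ≥ 2`; when `m = 1` the single
factor of higher degree has degree at most `N - 1`, forcing `r ≥ 2`; and when `m = 0` all
`N + 1 ≥ 4` factors have degree `1`.
-/

open Finset

def factorWeight (c x : ℤ) : ℤ :=
  if x = 1 then c else x * (4 * c - 1) - 5 * c + 2

section

variable {ι : Type*} (s : Finset ι) (n : ι → ℤ)

theorem sum_factorWeight (c : ℤ) :
    ∑ j ∈ s, factorWeight c (n j) =
      #{j ∈ s | n j = 1} * c + (∑ j ∈ s with n j ≠ 1, n j) * (4 * c - 1)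
        - #{j ∈ s | n j ≠ 1} * (5 * c - 2) := by
  simp only [factorWeight, sum_ite, sum_const, nsmul_eq_mul, sum_add_distrib, sum_sub_distrib,
    sum_mul]
  ring

theorem card_filter_eq_one_add_sum_filter_ne_one :
    (#{j ∈ s | n j = 1} : ℤ) + ∑ j ∈ s with n j ≠ 1, n j = ∑ j ∈ s, n j := by
  rw [← sum_filter_add_sum_filter_not s (fun j => n j = 1)]
  congr 1
  rw [sum_congr rfl fun j hj => (mem_filter.mp hj).2]
  simp

theorem two_mul_card_filter_ne_one_le_sum (hn : ∀ j ∈ s, 1 ≤ n j) :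
    2 * (#{j ∈ s | n j ≠ 1} : ℤ) ≤ ∑ j ∈ s with n j ≠ 1, n j := by
  rw [mul_comm, ← nsmul_eq_mul]
  refine card_nsmul_le_sum _ _ _ fun j hj => ?_
  obtain ⟨hjs, hj1⟩ := mem_filter.mp hj
  have := hn j hjs
  omega

end

theorem weight_deficit_nonneg {c N r m s : ℤ} (hc : 1 ≤ c) (hN : 3 ≤ N) (hr : 0 ≤ r)
    (hm : 0 ≤ m) (hs_low : 2 * m ≤ s) (hs_high : s ≤ m * (N - 1)) (hrs : r + s = N + 1) :
    0 ≤ r * (3 * c - 1) + (m - 2) * (5 * c - 2) := by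
  obtain rfl | rfl | hm2 : m = 0 ∨ m = 1 ∨ 2 ≤ m := by omega
  · have hr4 : 4 ≤ r := by linarith
    nlinarith
  · have hr2 : 2 ≤ r := by linarith
    nlinarith
  · have := mul_nonneg hr (by linarith : (0 : ℤ) ≤ 3 * c - 1)
    have := mul_nonneg (by linarith : (0 : ℤ) ≤ m - 2) (by linarith : (0 : ℤ) ≤ 5 * c - 2)
    linarith

theorem stmt6_general (c N : ℤ) (k : ℕ) (hc : 1 ≤ c) (hN : 3 ≤ N)
    (n : Fin k → ℤ) (hn1 : ∀ j, 1 ≤ n j) (hn2 : ∀ j, n j ≤ N - 1)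
    (hsum : ∑ j, n j = N + 1)
    (w : Fin k → ℤ)
    (hw : ∀ j, w j = if n j = 1 then c else n j * (4 * c - 1) - 5 * c + 2) :
    ∑ j, w j ≤ N * (4 * c - 1) - 3 * (2 * c - 1) := by
  have hw_sum : ∑ j, w j = ∑ j, factorWeight c (n j) := sum_congr rfl fun j _ => hw j
  have hs_high : ∑ j with n j ≠ 1, n j ≤ #{j | n j ≠ 1} * (N - 1) := by
    rw [← nsmul_eq_mul]
    exact sum_le_card_nsmul _ _ _ fun j _ => hn2 j
  have hrs := card_filter_eq_one_add_sum_filter_ne_one univ n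
  have := weight_deficit_nonneg hc hN (Nat.cast_nonneg _) (Nat.cast_nonneg _)
    (two_mul_card_filter_ne_one_le_sum univ n fun j _ => hn1 j) hs_high (hrs.trans hsum)
  rw [hw_sum, sum_factorWeight]
  linear_combination this + (4 * c - 1) * (hrs.trans hsum)

/-- Let `c, N, k` be integers with `c ≥ 1`, `N ≥ 3`, `k ≥ 2`, and let
`n_1, …, n_k` be integers with `1 ≤ n_j ≤ N - 1` for all `j` and
`n_1 + ⋯ + n_k = N + 1`.  With `w_j := c` if `n_j = 1` and
`w_j := n_j (4c - 1) - 5c + 2` if `n_j ≥ 2`, one has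
`Σ_j w_j ≤ N (4c - 1) - 3 (2c - 1)`. -/
theorem stmt6 (c N : ℤ) (k : ℕ) (hc : 1 ≤ c) (hN : 3 ≤ N) (hk : 2 ≤ k)
    (n : Fin k → ℤ) (hn1 : ∀ j, 1 ≤ n j) (hn2 : ∀ j, n j ≤ N - 1)
    (hsum : ∑ j, n j = N + 1)
    (w : Fin k → ℤ)
    (hw : ∀ j, w j = if n j = 1 then c else n j * (4 * c - 1) - 5 * c + 2) :
    ∑ j, w j ≤ N * (4 * c - 1) - 3 * (2 * c - 1) :=
  stmt6_general c N k hc hN n hn1 hn2 hsum w hw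
end

section
/- Let c ≥ 1 be an integer and let w(n, J) be integers defined for all integers n ≥ 1 and 1 ≤ J ≤ c, satisfying: (i) w(1, J) ≤ J for all 1 ≤ J ≤ c; (ii) w(2, J) ≤ 2c + J for all 1 ≤ J ≤ c; and (iii) for every n ≥ 3 and 1 ≤ J ≤ c, at least one of the following holds: (a) there exist an integer k ≥ 2, integers n_1, …, n_k with 1 ≤ n_j ≤ n − 1 and n_1 + ⋯ + n_k = n + 1, and integers i_1, …, i_k with 1 ≤ i_j ≤ c, such that w(n, J) ≤ Σ_{j=1}^k w(n_j, i_j); or (b) there exist integers a, b ≥ 1 with a + b ≤ J such that w(n, J) ≤ a + w(n, b). Then for every n ≥ 2 and 1 ≤ J ≤ c one has w(n, J) ≤ n(4c − 1) − 3(2c − 1) + (J − 1); in particular w(n, J) ≤ n(4c − 1) − 5c + 2. -/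
/-!
Write `α = 4c - 1`. For `1 ≤ m < n` and every step `i`, the weight `w m i` is at most
`m α - (2c - 1) min(m, 2) - c`: for `m = 1` by (i), for `m ≥ 2` by induction on the degree,
using `i ≤ c`. In case (a) the degrees sum to `n + 1` and none exceeds `n - 1`, which forces
`∑ min(n_j, 2) ≥ 4`; together with `k ≥ 2` this gives `w n J ≤ n α - 3 (2c - 1)`.
Case (b) pays `a` and lowers the step to `b ≤ J - a`, so induction on `J` adds at most `J - 1`.
-/

open Finset

theorem min_sum_le_sum_min {ι α : Type*} [AddCommMonoid α] [LinearOrder α] [IsOrderedAddMonoid α]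
    (s : Finset ι) {f : ι → α} (hf : ∀ i ∈ s, 0 ≤ f i) {t : α} (ht : 0 ≤ t) :
    min (∑ i ∈ s, f i) t ≤ ∑ i ∈ s, min (f i) t := by
  classical
  induction s using Finset.induction_on with
  | empty => simp [ht]
  | insert a s ha ih =>
    have hfa := hf a (mem_insert_self a s)
    have ih := ih fun i hi => hf i (mem_insert_of_mem hi)
    rw [sum_insert ha, sum_insert ha]
    rcases le_total t (f a) with hta | hat
    · rw [min_eq_right hta]
      exact (min_le_right _ _).trans <| le_add_of_nonneg_right <|
        sum_nonneg fun i hi => le_min (hf i (mem_insert_of_mem hi)) ht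
    · rw [min_eq_left hat]
      calc min (f a + ∑ i ∈ s, f i) t ≤ min (f a + ∑ i ∈ s, f i) (f a + t) :=
            min_le_min_left _ (le_add_of_nonneg_left hfa)
        _ = f a + min (∑ i ∈ s, f i) t := min_add_add_left _ _ _
        _ ≤ f a + ∑ i ∈ s, min (f i) t := by gcongr

theorem four_le_sum_min_two {ι : Type*} [Fintype ι] (a : ι → ℤ) (n : ℤ) (hn : 3 ≤ n)
    (ha : ∀ i, 1 ≤ a i ∧ a i ≤ n - 1) (hsum : ∑ i, a i = n + 1) :
    4 ≤ ∑ i, min (a i) 2 := by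
  classical
  by_cases hbig : ∃ i₀, 2 ≤ a i₀
  · obtain ⟨i₀, hi₀⟩ := hbig
    have hrest : min (∑ i ∈ univ.erase i₀, a i) 2 ≤ ∑ i ∈ univ.erase i₀, min (a i) 2 :=
      min_sum_le_sum_min _ (fun i _ => by linarith [ha i]) (by norm_num)
    rw [← add_sum_erase _ _ (mem_univ i₀)] at hsum ⊢
    have := ha i₀
    omega
  · have hsmall : ∀ i, min (a i) 2 = a i := fun i => min_eq_left (not_le.mp (hbig ⟨i, ·⟩)).le
    simp only [hsmall, hsum]
    omega

theorem le_add_sub_one_of_step (c B : ℤ) (v : ℤ → ℤ)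
    (hv : ∀ J, 1 ≤ J → J ≤ c →
      v J ≤ B ∨ ∃ a b : ℤ, 1 ≤ a ∧ 1 ≤ b ∧ a + b ≤ J ∧ v J ≤ a + v b) :
    ∀ J, 1 ≤ J → J ≤ c → v J ≤ B + (J - 1) := by
  intro J
  induction J using Int.strongRec (m := 1) with
  | lt J hJ => intro h; omega
  | ge J _ ih =>
    intro hJ1 hJc
    rcases hv J hJ1 hJc with h | ⟨a, b, ha, hb, hab, h⟩
    · omega
    · have := ih b (by omega) hb (by omega)
      omega

section Weights

variable {c : ℤ} {w : ℤ → ℤ → ℤ}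

theorem weight_le_of_one_le (h1 : ∀ J, 1 ≤ J → J ≤ c → w 1 J ≤ J) {m i : ℤ} (hm : 1 ≤ m)
    (hi : 1 ≤ i) (hic : i ≤ c)
    (ih : 2 ≤ m → w m i ≤ m * (4 * c - 1) - 3 * (2 * c - 1) + (i - 1)) :
    w m i ≤ m * (4 * c - 1) - (2 * c - 1) * min m 2 - c := by
  rcases eq_or_lt_of_le hm with rfl | hm2
  · have := h1 i hi hic
    simp only [min_eq_left one_le_two]
    linarith
  · rw [min_eq_right (by omega)]
    linarith [ih (by omega)]

theorem sum_weight_le (hc : 1 ≤ c) (h1 : ∀ J, 1 ≤ J → J ≤ c → w 1 J ≤ J) {n : ℤ} (hn : 3 ≤ n)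
    (ih : ∀ m, 2 ≤ m → m < n → ∀ J, 1 ≤ J → J ≤ c →
      w m J ≤ m * (4 * c - 1) - 3 * (2 * c - 1) + (J - 1))
    {k : ℕ} (hk : 2 ≤ k) (ns is : Fin k → ℤ) (hns : ∀ j, 1 ≤ ns j ∧ ns j ≤ n - 1)
    (hsum : ∑ j, ns j = n + 1) (his : ∀ j, 1 ≤ is j ∧ is j ≤ c) :
    ∑ j, w (ns j) (is j) ≤ n * (4 * c - 1) - 3 * (2 * c - 1) := by
  have hmin := four_le_sum_min_two ns n hn hns hsum
  have hk' : (2 : ℤ) ≤ k := by exact_mod_cast hk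
  calc ∑ j, w (ns j) (is j)
      ≤ ∑ j, (ns j * (4 * c - 1) - (2 * c - 1) * min (ns j) 2 - c) :=
        sum_le_sum fun j _ => weight_le_of_one_le h1 (hns j).1 (his j).1 (his j).2
          fun h2 => ih _ h2 (by linarith [hns j]) _ (his j).1 (his j).2
    _ = (n + 1) * (4 * c - 1) - (2 * c - 1) * ∑ j, min (ns j) 2 - k * c := by
        simp only [sum_sub_distrib, ← sum_mul, ← mul_sum, hsum, sum_const, card_univ,
          Fintype.card_fin, nsmul_eq_mul]
    _ ≤ (n + 1) * (4 * c - 1) - (2 * c - 1) * 4 - 2 * c := by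
        gcongr
        linarith
    _ = n * (4 * c - 1) - 3 * (2 * c - 1) := by ring

theorem weight_le (h1 : ∀ J, 1 ≤ J → J ≤ c → w 1 J ≤ J)
    (h2 : ∀ J, 1 ≤ J → J ≤ c → w 2 J ≤ 2 * c + J)
    (h3 : ∀ n J : ℤ, 3 ≤ n → 1 ≤ J → J ≤ c →
      (∃ (k : ℕ), 2 ≤ k ∧ ∃ (ns : Fin k → ℤ) (is : Fin k → ℤ),
        (∀ j, 1 ≤ ns j ∧ ns j ≤ n - 1) ∧ (∑ j, ns j) = n + 1 ∧
        (∀ j, 1 ≤ is j ∧ is j ≤ c) ∧ w n J ≤ ∑ j, w (ns j) (is j)) ∨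
      (∃ a b : ℤ, 1 ≤ a ∧ 1 ≤ b ∧ a + b ≤ J ∧ w n J ≤ a + w n b)) :
    ∀ n, 2 ≤ n → ∀ J, 1 ≤ J → J ≤ c →
      w n J ≤ n * (4 * c - 1) - 3 * (2 * c - 1) + (J - 1) := by
  intro n
  induction n using Int.strongRec (m := 2) with
  | lt n hn => intro h; omega
  | ge n hn ih =>
    intro _
    rcases eq_or_lt_of_le hn with rfl | hn3
    · intro J hJ1 hJc
      linarith [h2 J hJ1 hJc]
    · refine le_add_sub_one_of_step c _ (w n) fun J hJ1 hJc => (h3 n J hn3 hJ1 hJc).imp ?_ id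
      rintro ⟨k, hk, ns, is, hns, hsum, his, hw⟩
      exact hw.trans <| sum_weight_le (hJ1.trans hJc) h1 hn3 (fun m hm hmn => ih m hmn hm)
        hk ns is hns hsum his

end Weights

theorem stmt7_general (c : ℤ)
    (w : ℤ → ℤ → ℤ)
    (h1 : ∀ J : ℤ, 1 ≤ J → J ≤ c → w 1 J ≤ J)
    (h2 : ∀ J : ℤ, 1 ≤ J → J ≤ c → w 2 J ≤ 2 * c + J)
    (h3 : ∀ n J : ℤ, 3 ≤ n → 1 ≤ J → J ≤ c →
      (∃ (k : ℕ), 2 ≤ k ∧ ∃ (ns : Fin k → ℤ) (is : Fin k → ℤ),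
        (∀ j, 1 ≤ ns j ∧ ns j ≤ n - 1) ∧ (∑ j, ns j) = n + 1 ∧
        (∀ j, 1 ≤ is j ∧ is j ≤ c) ∧ w n J ≤ ∑ j, w (ns j) (is j)) ∨
      (∃ a b : ℤ, 1 ≤ a ∧ 1 ≤ b ∧ a + b ≤ J ∧ w n J ≤ a + w n b)) :
    ∀ n J : ℤ, 2 ≤ n → 1 ≤ J → J ≤ c →
      w n J ≤ n * (4 * c - 1) - 3 * (2 * c - 1) + (J - 1) ∧
        w n J ≤ n * (4 * c - 1) - 5 * c + 2 := by
  intro n J hn hJ1 hJc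
  have h := weight_le h1 h2 h3 n hn J hJ1 hJc
  exact ⟨h, by linarith⟩

/-- Let `c ≥ 1` and let `w n J` be integers (for `n ≥ 1`, `1 ≤ J ≤ c`) with:
(i) `w 1 J ≤ J`; (ii) `w 2 J ≤ 2c + J`; and (iii) for `n ≥ 3`, `1 ≤ J ≤ c`,
either (a) there are `k ≥ 2`, degrees `n_1, …, n_k` with `1 ≤ n_j ≤ n - 1`
summing to `n + 1`, and steps `i_1, …, i_k` with `1 ≤ i_j ≤ c`, such that
`w n J ≤ Σ_j w (n_j) (i_j)`, or (b) there are `a, b ≥ 1` with `a + b ≤ J`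
and `w n J ≤ a + w n b`.  Then for all `n ≥ 2`, `1 ≤ J ≤ c`:
`w n J ≤ n (4c - 1) - 3 (2c - 1) + (J - 1)`; in particular
`w n J ≤ n (4c - 1) - 5c + 2`. -/
theorem stmt7 (c : ℤ) (hc : 1 ≤ c)
    (w : ℤ → ℤ → ℤ)
    (h1 : ∀ J : ℤ, 1 ≤ J → J ≤ c → w 1 J ≤ J)
    (h2 : ∀ J : ℤ, 1 ≤ J → J ≤ c → w 2 J ≤ 2 * c + J)
    (h3 : ∀ n J : ℤ, 3 ≤ n → 1 ≤ J → J ≤ c →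
      (∃ (k : ℕ), 2 ≤ k ∧ ∃ (ns : Fin k → ℤ) (is : Fin k → ℤ),
        (∀ j, 1 ≤ ns j ∧ ns j ≤ n - 1) ∧ (∑ j, ns j) = n + 1 ∧
        (∀ j, 1 ≤ is j ∧ is j ≤ c) ∧ w n J ≤ ∑ j, w (ns j) (is j)) ∨
      (∃ a b : ℤ, 1 ≤ a ∧ 1 ≤ b ∧ a + b ≤ J ∧ w n J ≤ a + w n b)) :
    ∀ n J : ℤ, 2 ≤ n → 1 ≤ J → J ≤ c →
      w n J ≤ n * (4 * c - 1) - 3 * (2 * c - 1) + (J - 1) ∧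
        w n J ≤ n * (4 * c - 1) - 5 * c + 2 :=
  stmt7_general c w h1 h2 h3
end

section
/- Let c ≥ 1 be an integer and let w(n, J) be integers defined for all integers n ≥ 1 and 1 ≤ J ≤ c, satisfying: (i) w(1, J) ≤ J for all 1 ≤ J ≤ c; and (ii) for every n ≥ 2 and 1 ≤ J ≤ c, at least one of the following holds: (a) w(n, J) ≤ n; or (b) there exist integers n_1, n_2 ≥ 2 with n_1 + n_2 = n + 1 and integers i_1, i_2 with 1 ≤ i_1, i_2 ≤ c and i_1 + i_2 ≤ J + c, such that w(n, J) ≤ w(n_1, i_1) + w(n_2, i_2); or (c) there exist integers a, b ≥ 1 with a + b ≤ J such that w(n, J) ≤ a + w(n, b). Then for every n ≥ 2 and 1 ≤ J ≤ c one has w(n, J) ≤ (c + 1)(n − 1) + J − c; in particular w(n, J) ≤ (c + 1)(n − 1). -/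
/-- Let `c ≥ 1` and let `w n J` be integers (for `n ≥ 1`, `1 ≤ J ≤ c`) with:
(i) `w 1 J ≤ J`; and (ii) for `n ≥ 2`, `1 ≤ J ≤ c`, either (a) `w n J ≤ n`,
or (b) there are `n_1, n_2 ≥ 2` with `n_1 + n_2 = n + 1` and `1 ≤ i_1, i_2 ≤ c`
with `i_1 + i_2 ≤ J + c`, such that `w n J ≤ w n_1 i_1 + w n_2 i_2`, or
(c) there are `a, b ≥ 1` with `a + b ≤ J` and `w n J ≤ a + w n b`.
Then for all `n ≥ 2`, `1 ≤ J ≤ c`: `w n J ≤ (c + 1)(n - 1) + J - c`;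
in particular `w n J ≤ (c + 1)(n - 1)`. -/
theorem stmt8 (c : ℤ) (hc : 1 ≤ c)
    (w : ℤ → ℤ → ℤ)
    (h1 : ∀ J : ℤ, 1 ≤ J → J ≤ c → w 1 J ≤ J)
    (h2 : ∀ n J : ℤ, 2 ≤ n → 1 ≤ J → J ≤ c →
      (w n J ≤ n) ∨
      (∃ n1 n2 i1 i2 : ℤ, 2 ≤ n1 ∧ 2 ≤ n2 ∧ n1 + n2 = n + 1 ∧
        1 ≤ i1 ∧ i1 ≤ c ∧ 1 ≤ i2 ∧ i2 ≤ c ∧ i1 + i2 ≤ J + c ∧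
        w n J ≤ w n1 i1 + w n2 i2) ∨
      (∃ a b : ℤ, 1 ≤ a ∧ 1 ≤ b ∧ a + b ≤ J ∧ w n J ≤ a + w n b)) :
    ∀ n J : ℤ, 2 ≤ n → 1 ≤ J → J ≤ c →
      w n J ≤ (c + 1) * (n - 1) + J - c ∧ w n J ≤ (c + 1) * (n - 1) := by

  have key : ∀ k : ℕ, ∀ n J : ℤ, 2 ≤ n → 1 ≤ J → J ≤ c → (c+1)*n + J ≤ (k:ℤ) →
      w n J ≤ (c+1)*(n-1) + J - c := by
    intro k
    induction k using Nat.strong_induction_on with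
    | _ k IH =>
      intro n J hn hJ1 hJc hk
      have hk1 : (1:ℤ) ≤ (k:ℤ) := by nlinarith
      have hk1' : 1 ≤ k := by exact_mod_cast hk1
      have hcast : ((k-1 : ℕ):ℤ) = (k:ℤ) - 1 := by
        push_cast [hk1']; ring
      rcases h2 n J hn hJ1 hJc with ha |
        ⟨n1,n2,i1,i2,h21,h22,hsum,hi11,hi1c,hi21,hi2c,hii,hw⟩ | ⟨a,b,ha1,hb1,hab,hw⟩
      · nlinarith [mul_nonneg (by linarith : (0:ℤ) ≤ c) (by linarith : (0:ℤ) ≤ n-2)]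
      · have hb1 : w n1 i1 ≤ (c+1)*(n1-1) + i1 - c := by
          apply IH (k-1) (by omega) n1 i1 h21 hi11 hi1c
          rw [hcast]
          nlinarith
        have hb2 : w n2 i2 ≤ (c+1)*(n2-1) + i2 - c := by
          apply IH (k-1) (by omega) n2 i2 h22 hi21 hi2c
          rw [hcast]
          nlinarith
        have hn2 : n2 = n + 1 - n1 := by omega
        subst hn2
        have hexp : (c+1)*(n1-1) + (c+1)*(n+1-n1-1) = (c+1)*(n-1) := by ring
        linarith
      · have hbc : b ≤ c := by linarith
        have hwb : w n b ≤ (c+1)*(n-1) + b - c := by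
          apply IH (k-1) (by omega) n b hn hb1 hbc
          rw [hcast]; linarith
        linarith
  intro n J hn hJ1 hJc
  have hnn : (0:ℤ) ≤ (c+1)*n + J := by nlinarith
  have hmain := key ((c+1)*n + J).toNat n J hn hJ1 hJc
    (by rw [Int.toNat_of_nonneg hnn])
  exact ⟨hmain, by linarith⟩
end
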